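/- arXiv:1910.02572 — 2 statements merged into one kernel-verified Lean document; each statement's English description precedes it below -/
import Mathlib

section
/- Let m ≥ 2 be an integer and ρ : (0,∞) → ℝ a smooth function, and define φ : ℝ^m∖{0} → ℝ^m by φ(x) = ρ(|x|)·x/|x|. Then φ is biharmonic on ℝ^m∖{0} (i.e., Δ(Δφ)(x) = 0 for all x ≠ 0, the Laplacian taken componentwise) if and only if the function F(r) := ρ''(r) + (m−1)ρ'(r)/r − (m−1)ρ(r)/r² satisfies F''(r) + (m−1)F'(r)/r − (m−1)F(r)/r² = 0 for all r > 0. -/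
/-- The componentwise Euclidean Laplacian of a map defined on `EuclideanSpace ℝ (Fin m)`:
`Δ f (x) = ∑ᵢ ∂²f/∂xᵢ² (x)`. -/
noncomputable def lapE {m : ℕ} {F : Type*} [NormedAddCommGroup F] [NormedSpace ℝ F]
    (f : EuclideanSpace ℝ (Fin m) → F) (x : EuclideanSpace ℝ (Fin m)) : F :=
  ∑ i : Fin m,
    fderiv ℝ (fun y => fderiv ℝ f y (EuclideanSpace.single i (1 : ℝ))) x
      (EuclideanSpace.single i (1 : ℝ))


section Helpers
open scoped RealInnerProductSpace

theorem my_hasFDerivAt_norm {E : Type*} [NormedAddCommGroup E] [InnerProductSpace ℝ E] (x : E) (hx : x ≠ 0) :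
    HasFDerivAt (fun y : E => ‖y‖) (‖x‖⁻¹ • innerSL ℝ x) x := by
  have h1 : HasFDerivAt (fun y : E => ⟪y, y⟫) ((2:ℝ) • innerSL ℝ x) x := by
    have := (hasFDerivAt_id x).inner ℝ (hasFDerivAt_id x)
    refine this.congr_fderiv ?_
    ext v
    simp [fderivInnerCLM_apply, real_inner_comm, two_mul]
  have hxx : ⟪x, x⟫ ≠ 0 := by
    rw [real_inner_self_eq_norm_sq]
    exact pow_ne_zero _ (norm_ne_zero_iff.mpr hx)
  have h2 : HasFDerivAt (fun y : E => Real.sqrt ⟪y, y⟫)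
      ((1 / (2 * Real.sqrt ⟪x, x⟫)) • ((2:ℝ) • innerSL ℝ x)) x :=
    HasDerivAt.comp_hasFDerivAt (f := fun y : E => ⟪y, y⟫) x (Real.hasDerivAt_sqrt hxx) h1
  have h3 : (fun y : E => Real.sqrt ⟪y, y⟫) = fun y : E => ‖y‖ := by
    funext y
    rw [real_inner_self_eq_norm_sq, Real.sqrt_sq (norm_nonneg y)]
  rw [h3] at h2
  convert h2 using 1
  rw [real_inner_self_eq_norm_sq, Real.sqrt_sq (norm_nonneg x)]
  ext v
  have : ‖x‖ ≠ 0 := norm_ne_zero_iff.mpr hx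
  simp only [ContinuousLinearMap.smul_apply, smul_eq_mul]
  field_simp

variable {m : ℕ}

theorem hasFDerivAt_radial (f : ℝ → ℝ) (x : EuclideanSpace ℝ (Fin m)) (hx : x ≠ 0)
    (hf : DifferentiableAt ℝ f ‖x‖) :
    HasFDerivAt (fun y : EuclideanSpace ℝ (Fin m) => f ‖y‖ • y)
      (f ‖x‖ • ContinuousLinearMap.id ℝ (EuclideanSpace ℝ (Fin m))
        + ((deriv f ‖x‖) • (‖x‖⁻¹ • innerSL ℝ x)).smulRight x) x := by
  have hc : HasFDerivAt (fun y : EuclideanSpace ℝ (Fin m) => f ‖y‖)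
      ((deriv f ‖x‖) • (‖x‖⁻¹ • innerSL ℝ x)) x :=
    HasDerivAt.comp_hasFDerivAt (f := fun y : EuclideanSpace ℝ (Fin m) => ‖y‖) x
      hf.hasDerivAt (my_hasFDerivAt_norm x hx)
  exact hc.smul (hasFDerivAt_id x)

theorem fderiv_radial_apply (f : ℝ → ℝ) (x : EuclideanSpace ℝ (Fin m)) (hx : x ≠ 0)
    (hf : DifferentiableAt ℝ f ‖x‖) (i : Fin m) :
    fderiv ℝ (fun y : EuclideanSpace ℝ (Fin m) => f ‖y‖ • y) x (EuclideanSpace.single i 1)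
      = f ‖x‖ • EuclideanSpace.single i (1:ℝ) + (deriv f ‖x‖ * (‖x‖⁻¹ * x i)) • x := by
  rw [(hasFDerivAt_radial f x hx hf).fderiv]
  simp [EuclideanSpace.inner_single_right, mul_assoc]

theorem deriv_smooth {f : ℝ → ℝ} (hf : ∀ r : ℝ, 0 < r → ContDiffAt ℝ (⊤ : ℕ∞) f r) :
    ∀ r : ℝ, 0 < r → ContDiffAt ℝ (⊤ : ℕ∞) (deriv f) r := by
  intro r hr
  have hOn : ContDiffOn ℝ (⊤ : ℕ∞) f (Set.Ioi 0) := fun s hs => (hf s hs).contDiffWithinAt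
  exact (hOn.deriv_of_isOpen isOpen_Ioi (by simp)).contDiffAt (isOpen_Ioi.mem_nhds hr)

theorem key_term (f : ℝ → ℝ) (hf : ∀ r : ℝ, 0 < r → ContDiffAt ℝ (⊤ : ℕ∞) f r)
    (x : EuclideanSpace ℝ (Fin m)) (hx : x ≠ 0) (i : Fin m) :
    fderiv ℝ (fun y : EuclideanSpace ℝ (Fin m) =>
        f ‖y‖ • EuclideanSpace.single i (1:ℝ) + (deriv f ‖y‖ * (‖y‖⁻¹ * y i)) • y) x
        (EuclideanSpace.single i (1:ℝ))
      = (2 * (deriv f ‖x‖ * (‖x‖⁻¹ * x i))) • EuclideanSpace.single i (1:ℝ)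
        + (deriv f ‖x‖ * (‖x‖⁻¹ + x i * (-(‖x‖^2)⁻¹ * (‖x‖⁻¹ * x i)))
            + ‖x‖⁻¹ * x i * (deriv (deriv f) ‖x‖ * (‖x‖⁻¹ * x i))) • x := by
  have hr : (0:ℝ) < ‖x‖ := norm_pos_iff.mpr hx
  have hN := my_hasFDerivAt_norm x hx
  have hf1 : DifferentiableAt ℝ f ‖x‖ := ((hf _ hr).of_le (by simp)).differentiableAt one_ne_zero
  have hf2 : DifferentiableAt ℝ (deriv f) ‖x‖ :=
    ((deriv_smooth hf _ hr).of_le (by simp)).differentiableAt one_ne_zero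
  have hF1 : HasFDerivAt (fun y : EuclideanSpace ℝ (Fin m) => f ‖y‖)
      ((deriv f ‖x‖) • (‖x‖⁻¹ • innerSL ℝ x)) x :=
    HasDerivAt.comp_hasFDerivAt (f := fun y : EuclideanSpace ℝ (Fin m) => ‖y‖) x
      hf1.hasDerivAt hN
  have hF2 : HasFDerivAt (fun y : EuclideanSpace ℝ (Fin m) => deriv f ‖y‖)
      ((deriv (deriv f) ‖x‖) • (‖x‖⁻¹ • innerSL ℝ x)) x :=
    HasDerivAt.comp_hasFDerivAt (f := fun y : EuclideanSpace ℝ (Fin m) => ‖y‖) x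
      hf2.hasDerivAt hN
  have hinv : HasFDerivAt (fun y : EuclideanSpace ℝ (Fin m) => ‖y‖⁻¹)
      ((-(‖x‖^2)⁻¹) • (‖x‖⁻¹ • innerSL ℝ x)) x :=
    HasDerivAt.comp_hasFDerivAt (f := fun y : EuclideanSpace ℝ (Fin m) => ‖y‖) x
      (hasDerivAt_inv (ne_of_gt hr)) hN
  have hproj : HasFDerivAt (fun y : EuclideanSpace ℝ (Fin m) => y i)
      ((EuclideanSpace.proj i : EuclideanSpace ℝ (Fin m) →L[ℝ] ℝ)) x := by
    exact (EuclideanSpace.proj i : EuclideanSpace ℝ (Fin m) →L[ℝ] ℝ).hasFDerivAt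
  have hu := hF2.mul (hinv.mul hproj)
  have hΨ := (hF1.smul (hasFDerivAt_const (EuclideanSpace.single i (1:ℝ)) x)).add
    (hu.smul (hasFDerivAt_id x))
  simp only [id_eq] at hΨ
  rw [(show HasFDerivAt (fun y : EuclideanSpace ℝ (Fin m) => f ‖y‖ • EuclideanSpace.single i (1:ℝ) + (deriv f ‖y‖ * (‖y‖⁻¹ * y i)) • y) _ x from hΨ).fderiv]
  simp only [ContinuousLinearMap.add_apply, ContinuousLinearMap.smul_apply,
    ContinuousLinearMap.smulRight_apply, ContinuousLinearMap.zero_apply,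
    ContinuousLinearMap.id_apply, ContinuousLinearMap.coe_smul', Pi.smul_apply,
    innerSL_apply_apply, EuclideanSpace.inner_single_right, RCLike.star_def, conj_trivial,
    smul_eq_mul, mul_one, smul_zero, zero_add, add_zero, PiLp.proj_apply, EuclideanSpace.single_apply, if_true, Pi.mul_apply]
  module

theorem sum_smul_single (x : EuclideanSpace ℝ (Fin m)) :
    ∑ i : Fin m, x i • EuclideanSpace.single i (1:ℝ) = x := by
  ext j
  rw [show (∑ i : Fin m, x i • EuclideanSpace.single i (1:ℝ)) j
      = ∑ i : Fin m, (x i • EuclideanSpace.single i (1:ℝ)) j from by rw [WithLp.ofLp_sum]; exact Finset.sum_apply j _ _]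
  simp [EuclideanSpace.single_apply, mul_ite, Finset.sum_ite_eq]

theorem sum_sq (x : EuclideanSpace ℝ (Fin m)) : ∑ i : Fin m, x i ^ 2 = ‖x‖ ^ 2 := by
  rw [EuclideanSpace.norm_eq, Real.sq_sqrt (by positivity)]
  simp [sq_abs]

theorem lapE_radial (f : ℝ → ℝ) (hf : ∀ r : ℝ, 0 < r → ContDiffAt ℝ (⊤ : ℕ∞) f r)
    (x : EuclideanSpace ℝ (Fin m)) (hx : x ≠ 0) :
    lapE (fun y : EuclideanSpace ℝ (Fin m) => f ‖y‖ • y) x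
      = (deriv (deriv f) ‖x‖ + ((m : ℝ) + 1) * deriv f ‖x‖ / ‖x‖) • x := by
  have hr : (0:ℝ) < ‖x‖ := norm_pos_iff.mpr hx
  have hstep : ∀ i : Fin m,
      fderiv ℝ (fun y => fderiv ℝ (fun z : EuclideanSpace ℝ (Fin m) => f ‖z‖ • z) y
          (EuclideanSpace.single i (1:ℝ))) x (EuclideanSpace.single i (1:ℝ))
      = (2 * (deriv f ‖x‖ * (‖x‖⁻¹ * x i))) • EuclideanSpace.single i (1:ℝ)
        + (deriv f ‖x‖ * (‖x‖⁻¹ + x i * (-(‖x‖^2)⁻¹ * (‖x‖⁻¹ * x i)))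
            + ‖x‖⁻¹ * x i * (deriv (deriv f) ‖x‖ * (‖x‖⁻¹ * x i))) • x := by
    intro i
    have hev : (fun y => fderiv ℝ (fun z : EuclideanSpace ℝ (Fin m) => f ‖z‖ • z) y
          (EuclideanSpace.single i (1:ℝ)))
        =ᶠ[nhds x] (fun y => f ‖y‖ • EuclideanSpace.single i (1:ℝ)
          + (deriv f ‖y‖ * (‖y‖⁻¹ * y i)) • y) := by
      filter_upwards [IsOpen.mem_nhds isOpen_compl_singleton hx] with y hy
      exact fderiv_radial_apply f y hy
        (((hf _ (norm_pos_iff.mpr hy)).of_le (by simp)).differentiableAt one_ne_zero) i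
    rw [hev.fderiv_eq]
    exact key_term f hf x hx i
  unfold lapE
  rw [Finset.sum_congr rfl (fun i _ => hstep i), Finset.sum_add_distrib]
  have h1 : ∑ i : Fin m, (2 * (deriv f ‖x‖ * (‖x‖⁻¹ * x i))) • EuclideanSpace.single i (1:ℝ)
      = (2 * deriv f ‖x‖ * ‖x‖⁻¹) • x := by
    have he : ∀ i : Fin m, (2 * (deriv f ‖x‖ * (‖x‖⁻¹ * x i))) • EuclideanSpace.single i (1:ℝ)
        = (2 * deriv f ‖x‖ * ‖x‖⁻¹) • (x i • EuclideanSpace.single i (1:ℝ)) := by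
      intro i
      rw [smul_smul]
      ring_nf
    rw [Finset.sum_congr rfl fun i _ => he i, ← Finset.smul_sum, sum_smul_single]
  have h2 : ∑ i : Fin m, (deriv f ‖x‖ * (‖x‖⁻¹ + x i * (-(‖x‖^2)⁻¹ * (‖x‖⁻¹ * x i)))
            + ‖x‖⁻¹ * x i * (deriv (deriv f) ‖x‖ * (‖x‖⁻¹ * x i))) • x
      = (deriv (deriv f) ‖x‖ + ((m:ℝ) - 1) * deriv f ‖x‖ / ‖x‖) • x := by
    rw [← Finset.sum_smul]
    congr 1
    have : ∀ i : Fin m, deriv f ‖x‖ * (‖x‖⁻¹ + x i * (-(‖x‖^2)⁻¹ * (‖x‖⁻¹ * x i)))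
            + ‖x‖⁻¹ * x i * (deriv (deriv f) ‖x‖ * (‖x‖⁻¹ * x i))
        = deriv f ‖x‖ * ‖x‖⁻¹
          + (deriv (deriv f) ‖x‖ * ‖x‖⁻¹ * ‖x‖⁻¹ - deriv f ‖x‖ * (‖x‖^2)⁻¹ * ‖x‖⁻¹) * x i ^ 2 := by
      intro i; ring
    rw [Finset.sum_congr rfl fun i _ => this i, Finset.sum_add_distrib, Finset.sum_const,
      ← Finset.mul_sum, sum_sq, Finset.card_univ, Fintype.card_fin, nsmul_eq_mul]
    field_simp
    ring
  rw [h1, h2, ← add_smul]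
  congr 1
  field_simp
  ring


theorem lapE_congr {F : Type*} [NormedAddCommGroup F] [NormedSpace ℝ F]
    {f g : EuclideanSpace ℝ (Fin m) → F} {x : EuclideanSpace ℝ (Fin m)}
    (h : f =ᶠ[nhds x] g) : lapE f x = lapE g x := by
  unfold lapE
  refine Finset.sum_congr rfl fun i _ => ?_
  have h1 : (fun y => fderiv ℝ f y (EuclideanSpace.single i (1:ℝ)))
      =ᶠ[nhds x] (fun y => fderiv ℝ g y (EuclideanSpace.single i (1:ℝ))) :=
    (h.fderiv (𝕜 := ℝ)).mono fun y hy => by simp only []; rw [hy]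
  rw [h1.fderiv_eq]

theorem L_smooth (f : ℝ → ℝ) (hf : ∀ r : ℝ, 0 < r → ContDiffAt ℝ (⊤ : ℕ∞) f r) (c : ℝ) :
    ∀ r : ℝ, 0 < r → ContDiffAt ℝ (⊤ : ℕ∞)
      (fun s => deriv (deriv f) s + c * deriv f s / s) r := by
  intro r hr
  exact (deriv_smooth (deriv_smooth hf) r hr).add
    (((contDiffAt_const.mul (deriv_smooth hf r hr)).div contDiffAt_id (ne_of_gt hr)))

theorem lapE_lapE (f : ℝ → ℝ) (hf : ∀ r : ℝ, 0 < r → ContDiffAt ℝ (⊤ : ℕ∞) f r)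
    (x : EuclideanSpace ℝ (Fin m)) (hx : x ≠ 0) :
    lapE (lapE (fun y : EuclideanSpace ℝ (Fin m) => f ‖y‖ • y)) x
      = (deriv (deriv (fun s => deriv (deriv f) s + ((m : ℝ) + 1) * deriv f s / s)) ‖x‖
          + ((m : ℝ) + 1) * deriv (fun s => deriv (deriv f) s + ((m : ℝ) + 1) * deriv f s / s) ‖x‖ / ‖x‖) • x := by
  have hev : lapE (fun y : EuclideanSpace ℝ (Fin m) => f ‖y‖ • y)
      =ᶠ[nhds x] (fun y => (deriv (deriv f) ‖y‖ + ((m : ℝ) + 1) * deriv f ‖y‖ / ‖y‖) • y) := by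
    filter_upwards [IsOpen.mem_nhds isOpen_compl_singleton hx] with y hy
    exact lapE_radial f hf y hy
  rw [lapE_congr hev]
  exact lapE_radial _ (L_smooth f hf _) x hx


noncomputable def Lop (c : ℝ) (f : ℝ → ℝ) : ℝ → ℝ :=
  fun s => deriv (deriv f) s + c * deriv f s / s

theorem lapE_lapE' (f : ℝ → ℝ) (hf : ∀ r : ℝ, 0 < r → ContDiffAt ℝ (⊤ : ℕ∞) f r)
    (x : EuclideanSpace ℝ (Fin m)) (hx : x ≠ 0) :
    lapE (lapE (fun y : EuclideanSpace ℝ (Fin m) => f ‖y‖ • y)) x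
      = (Lop ((m : ℝ) + 1) (Lop ((m : ℝ) + 1) f) ‖x‖) • x :=
  lapE_lapE f hf x hx

theorem deriv_div_self (ρ : ℝ → ℝ) (hρ : ∀ r : ℝ, 0 < r → ContDiffAt ℝ (⊤ : ℕ∞) ρ r)
    (s : ℝ) (hs : 0 < s) :
    deriv (fun t => ρ t / t) s = deriv ρ s / s - ρ s / s ^ 2 := by
  have h := (((hρ s hs).of_le (by simp)).differentiableAt one_ne_zero).hasDerivAt.div
    (hasDerivAt_id' (x := s)) (ne_of_gt hs)
  rw [(show HasDerivAt (fun t => ρ t / t) _ s from h).deriv]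
  field_simp

theorem deriv2_div_self (ρ : ℝ → ℝ) (hρ : ∀ r : ℝ, 0 < r → ContDiffAt ℝ (⊤ : ℕ∞) ρ r)
    (s : ℝ) (hs : 0 < s) :
    deriv (deriv (fun t => ρ t / t)) s
      = deriv (deriv ρ) s / s - 2 * deriv ρ s / s ^ 2 + 2 * ρ s / s ^ 3 := by
  have hev : deriv (fun t => ρ t / t) =ᶠ[nhds s] (fun t => deriv ρ t / t - ρ t / t ^ 2) := by
    filter_upwards [isOpen_Ioi.mem_nhds hs] with t ht
    exact deriv_div_self ρ hρ t ht
  rw [hev.deriv_eq]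
  have hd1 : DifferentiableAt ℝ (deriv ρ) s :=
    ((deriv_smooth hρ s hs).of_le (by simp)).differentiableAt one_ne_zero
  have hd0 : DifferentiableAt ℝ ρ s :=
    ((hρ s hs).of_le (by simp)).differentiableAt one_ne_zero
  have h1 := hd1.hasDerivAt.div (hasDerivAt_id' (x := s)) (ne_of_gt hs)
  have h2 := hd0.hasDerivAt.div (hasDerivAt_pow 2 s) (by positivity)
  rw [(show HasDerivAt (fun t => deriv ρ t / t - ρ t / t ^ 2) _ s from h1.sub h2).deriv]
  field_simp
  ring

end Helpers

/- STATEMENT 7: φ(x) = ρ(|x|)x/|x| is biharmonic on ℝ^m∖{0} iff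
F(r) = ρ'' + (m−1)ρ'/r − (m−1)ρ/r² satisfies
F'' + (m−1)F'/r − (m−1)F/r² = 0 on (0,∞). -/
theorem stmt_7 (m : ℕ) (hm : 2 ≤ m) (ρ : ℝ → ℝ)
    (hρ : ∀ r : ℝ, 0 < r → ContDiffAt ℝ (⊤ : ℕ∞) ρ r)
    (F : ℝ → ℝ)
    (hF : ∀ r : ℝ, 0 < r →
      F r = deriv (deriv ρ) r + ((m : ℝ) - 1) * deriv ρ r / r
        - ((m : ℝ) - 1) * ρ r / r ^ 2) :
    (∀ x : EuclideanSpace ℝ (Fin m), x ≠ 0 →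
        lapE (lapE (fun y : EuclideanSpace ℝ (Fin m) => (ρ ‖y‖ / ‖y‖) • y)) x = 0) ↔
    (∀ r : ℝ, 0 < r →
        deriv (deriv F) r + ((m : ℝ) - 1) * deriv F r / r
          - ((m : ℝ) - 1) * F r / r ^ 2 = 0) := by
  have hg : ∀ r : ℝ, 0 < r → ContDiffAt ℝ (⊤ : ℕ∞) (fun s => ρ s / s) r := fun r hr =>
    (hρ r hr).div contDiffAt_id (ne_of_gt hr)
  set H : ℝ → ℝ := Lop ((m : ℝ) + 1) (fun s => ρ s / s) with hHdef
  have hHs : ∀ r : ℝ, 0 < r → ContDiffAt ℝ (⊤ : ℕ∞) H r := by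
    rw [hHdef]
    exact L_smooth _ hg _
  have hFH : ∀ s : ℝ, 0 < s → F s = s * H s := by
    intro s hs
    rw [hF s hs, hHdef]
    simp only [Lop]
    rw [deriv_div_self ρ hρ s hs, deriv2_div_self ρ hρ s hs]
    field_simp
    ring
  have hderivF : ∀ s : ℝ, 0 < s → deriv F s = H s + s * deriv H s := by
    intro s hs
    have hev : F =ᶠ[nhds s] fun t => t * H t := by
      filter_upwards [isOpen_Ioi.mem_nhds hs] with t ht
      exact hFH t ht
    have hHd : DifferentiableAt ℝ H s := ((hHs s hs).of_le (by simp)).differentiableAt one_ne_zero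
    rw [hev.deriv_eq, (show HasDerivAt (fun t => t * H t) _ s from (hasDerivAt_id' (x := s)).mul hHd.hasDerivAt).deriv]
    ring
  have hderiv2F : ∀ s : ℝ, 0 < s →
      deriv (deriv F) s = 2 * deriv H s + s * deriv (deriv H) s := by
    intro s hs
    have hev : deriv F =ᶠ[nhds s] fun t => H t + t * deriv H t := by
      filter_upwards [isOpen_Ioi.mem_nhds hs] with t ht
      exact hderivF t ht
    have hHd : DifferentiableAt ℝ H s := ((hHs s hs).of_le (by simp)).differentiableAt one_ne_zero
    have hHd2 : DifferentiableAt ℝ (deriv H) s :=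
      ((deriv_smooth hHs s hs).of_le (by simp)).differentiableAt one_ne_zero
    rw [hev.deriv_eq,
      (show HasDerivAt (fun t => H t + t * deriv H t) _ s from hHd.hasDerivAt.add ((hasDerivAt_id' (x := s)).mul hHd2.hasDerivAt)).deriv]
    ring
  have key : ∀ r : ℝ, 0 < r →
      deriv (deriv F) r + ((m : ℝ) - 1) * deriv F r / r - ((m : ℝ) - 1) * F r / r ^ 2
        = r * Lop ((m : ℝ) + 1) H r := by
    intro r hr
    rw [hderiv2F r hr, hderivF r hr, hFH r hr]
    simp only [Lop]
    field_simp
    ring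
  constructor
  · intro h r hr
    have hi0 : (0 : ℕ) < m := by omega
    set x : EuclideanSpace ℝ (Fin m) := EuclideanSpace.single (⟨0, hi0⟩ : Fin m) r with hxdef
    have hx0 : x ≠ 0 := by
      intro h0
      have := congrArg (fun v : EuclideanSpace ℝ (Fin m) => v ⟨0, hi0⟩) h0
      simp [hxdef, EuclideanSpace.single_apply] at this
      exact absurd this (ne_of_gt hr)
    have hxn : ‖x‖ = r := by
      rw [hxdef, EuclideanSpace.norm_single, Real.norm_eq_abs, abs_of_pos hr]
    have hb : (Lop ((m : ℝ) + 1) (Lop ((m : ℝ) + 1) (fun s => ρ s / s)) ‖x‖) • x = 0 :=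
      (lapE_lapE' (fun s => ρ s / s) hg x hx0).symm.trans (h x hx0)
    rw [hxn, ← hHdef] at hb
    rcases smul_eq_zero.mp hb with hc | hc
    · rw [key r hr, hc, mul_zero]
    · exact absurd hc hx0
  · intro h x hx
    have hr : (0 : ℝ) < ‖x‖ := norm_pos_iff.mpr hx
    have hzero : Lop ((m : ℝ) + 1) H ‖x‖ = 0 := by
      have hk := key ‖x‖ hr
      rw [h ‖x‖ hr] at hk
      rcases mul_eq_zero.mp hk.symm with hc | hc
      · exact absurd hc (ne_of_gt hr)
      · exact hc
    have := lapE_lapE' (fun s => ρ s / s) hg x hx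
    rw [← hHdef] at this
    rw [hzero, zero_smul] at this
    exact this
end

section
/- The inversion in the 3-sphere, φ : ℝ⁴∖{0} → ℝ⁴∖{0}, φ(x) = x/|x|², is a proper biharmonic conformal map: (i) its componentwise Euclidean Laplacian satisfies Δφ(x) = −4·x/|x|⁴, which is nonzero for every x ≠ 0; (ii) Δ(Δφ)(x) = 0 for every x ≠ 0; and (iii) for every x ≠ 0 the Fréchet derivative of φ at x is a nonzero conformal linear map from ℝ⁴ to ℝ⁴. -/
/-!
Write `f_k(x) = x / |x|^(2k)` on `ℝ^m`. Differentiating twice along the coordinate directions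
and summing gives `Δ f_k = 2k (2k - m) f_(k+1)` away from the origin. In `ℝ⁴` the inversion is
`f_1`, so `Δφ = -4 f_2`, and `Δ f_2 = 0` because `2k = m` for `k = 2`. Conformality holds because
`Dφ(x)` is `|x|⁻²` times the reflection in the hyperplane `x^⊥`.
-/

open RealInnerProductSpace Filter Topology

section InverseNormPower

variable {E : Type*} [NormedAddCommGroup E] [InnerProductSpace ℝ E]

theorem hasFDerivAt_inv_norm_sq_pow (k : ℕ) {x : E} (hx : x ≠ 0) :
    HasFDerivAt (fun y : E => ((‖y‖ ^ 2) ^ k)⁻¹)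
      ((-2 * k * ((‖x‖ ^ 2) ^ (k + 1))⁻¹) • innerSL ℝ x) x := by
  have hr : ‖x‖ ^ 2 ≠ 0 := by positivity
  have hz : (‖x‖ ^ 2) ^ (-(k : ℤ) - 1) = ((‖x‖ ^ 2) ^ (k + 1))⁻¹ := by
    rw [show -(k : ℤ) - 1 = -((k + 1 : ℕ) : ℤ) by push_cast; ring, zpow_neg, zpow_natCast]
  have h := (hasDerivAt_zpow (-(k : ℤ)) _ (Or.inl hr)).comp_hasFDerivAt x
    (hasStrictFDerivAt_norm_sq x).hasFDerivAt
  simp only [Function.comp_def, zpow_neg, zpow_natCast, hz] at h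
  refine h.congr_fderiv ?_
  ext w
  simp only [smul_apply, innerSL_apply_apply, smul_eq_mul, nsmul_eq_mul]
  push_cast
  ring

theorem hasFDerivAt_inv_norm_sq_pow_smul (k : ℕ) {x : E} (hx : x ≠ 0) :
    HasFDerivAt (fun y : E => ((‖y‖ ^ 2) ^ k)⁻¹ • y)
      (((‖x‖ ^ 2) ^ k)⁻¹ • ContinuousLinearMap.id ℝ E
        + ((-2 * k * ((‖x‖ ^ 2) ^ (k + 1))⁻¹) • innerSL ℝ x).smulRight x) x :=
  (hasFDerivAt_inv_norm_sq_pow k hx).smul (hasFDerivAt_id x)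

theorem fderiv_inv_norm_sq_pow_smul_apply (k : ℕ) {x : E} (hx : x ≠ 0) (v : E) :
    fderiv ℝ (fun y : E => ((‖y‖ ^ 2) ^ k)⁻¹ • y) x v =
      ((‖x‖ ^ 2) ^ k)⁻¹ • v + (-2 * k * ((‖x‖ ^ 2) ^ (k + 1))⁻¹ * ⟪x, v⟫) • x := by
  simp [(hasFDerivAt_inv_norm_sq_pow_smul k hx).fderiv, mul_assoc]

theorem fderiv_fderiv_inv_norm_sq_pow_smul_apply (k : ℕ) {x : E} (hx : x ≠ 0) (v : E) :
    fderiv ℝ (fun y => fderiv ℝ (fun z : E => ((‖z‖ ^ 2) ^ k)⁻¹ • z) y v) x v =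
      (-4 * k * ((‖x‖ ^ 2) ^ (k + 1))⁻¹ * ⟪x, v⟫) • v +
      (4 * k * (k + 1) * ((‖x‖ ^ 2) ^ (k + 2))⁻¹ * ⟪x, v⟫ ^ 2
        - 2 * k * ((‖x‖ ^ 2) ^ (k + 1))⁻¹ * ‖v‖ ^ 2) • x := by
  have hfirst : (fun y => fderiv ℝ (fun z : E => ((‖z‖ ^ 2) ^ k)⁻¹ • z) y v) =ᶠ[𝓝 x]
      fun y => ((‖y‖ ^ 2) ^ k)⁻¹ • v + (-2 * k * ((‖y‖ ^ 2) ^ (k + 1))⁻¹ * ⟪y, v⟫) • y := by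
    filter_upwards [isOpen_ne.mem_nhds hx] with y hy
    exact fderiv_inv_norm_sq_pow_smul_apply k hy v
  have hinner : HasFDerivAt (fun y : E => ⟪y, v⟫) (innerSL ℝ v) x := by
    have h : (fun y : E => ⟪y, v⟫) = innerSL ℝ v := funext fun y => real_inner_comm v y
    exact h ▸ (innerSL ℝ v).hasFDerivAt
  have h : HasFDerivAt
      (fun y => ((‖y‖ ^ 2) ^ k)⁻¹ • v + (-2 * k * ((‖y‖ ^ 2) ^ (k + 1))⁻¹ * ⟪y, v⟫) • y) _ x :=
    ((hasFDerivAt_inv_norm_sq_pow k hx).smul_const v).add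
    ((((hasFDerivAt_inv_norm_sq_pow (k + 1) hx).const_mul (-2 * k)).mul hinner).smul
      (hasFDerivAt_id x))
  rw [hfirst.fderiv_eq, h.fderiv]
  simp only [add_apply, smul_apply, ContinuousLinearMap.smulRight_apply,
    ContinuousLinearMap.coe_id', id_eq, innerSL_apply_apply, smul_eq_mul, Pi.mul_apply,
    real_inner_self_eq_norm_sq]
  match_scalars <;> ring

theorem fderiv_inv_norm_sq_smul {x : E} (hx : x ≠ 0) :
    fderiv ℝ (fun y : E => (‖y‖ ^ 2)⁻¹ • y) x =
      (‖x‖ ^ 2)⁻¹ • (ℝ ∙ x)ᗮ.reflection.toLinearIsometry.toContinuousLinearMap := by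
  ext v
  have h := fderiv_inv_norm_sq_pow_smul_apply 1 hx v
  simp only [pow_one] at h
  have hr : ‖x‖ ^ 2 ≠ 0 := by positivity
  rw [h, smul_apply]
  simp only [LinearIsometry.coe_toContinuousLinearMap, LinearIsometryEquiv.coe_toLinearIsometry,
    Submodule.reflection_orthogonal_apply, Submodule.reflection_singleton_apply,
    RCLike.ofReal_real_eq_id, id_eq]
  match_scalars <;> field_simp
  ring

theorem isConformalMap_fderiv_inv_norm_sq_smul {x : E} (hx : x ≠ 0) :
    IsConformalMap (fderiv ℝ (fun y : E => (‖y‖ ^ 2)⁻¹ • y) x) := by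
  rw [fderiv_inv_norm_sq_smul hx]
  exact (LinearIsometry.isConformalMap _).smul (by positivity)

end InverseNormPower

section Laplacian

variable {m : ℕ} {F : Type*} [NormedAddCommGroup F] [NormedSpace ℝ F]

theorem lapE_congr_of_eventuallyEq {f g : EuclideanSpace ℝ (Fin m) → F}
    {x : EuclideanSpace ℝ (Fin m)} (h : f =ᶠ[𝓝 x] g) : lapE f x = lapE g x := by
  refine Finset.sum_congr rfl fun i _ => ?_
  congr 1
  refine EventuallyEq.fderiv_eq ?_
  filter_upwards [h.eventually_nhds] with y hy
  rw [EventuallyEq.fderiv_eq (hy : f =ᶠ[𝓝 y] g)]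

theorem lapE_const_smul (c : ℝ) (f : EuclideanSpace ℝ (Fin m) → F) :
    lapE (c • f) = c • lapE f := by
  funext x
  simp only [lapE, Pi.smul_apply, Finset.smul_sum, fderiv_const_smul_field, smul_apply]
  refine Finset.sum_congr rfl fun i _ => ?_
  exact congrArg (fun L => L x (EuclideanSpace.single i 1))
    (fderiv_const_smul_field (𝕜 := ℝ) (f := fun y => fderiv ℝ f y (EuclideanSpace.single i 1)) c)

theorem lapE_inv_norm_sq_pow_smul (k : ℕ) {x : EuclideanSpace ℝ (Fin m)} (hx : x ≠ 0) :
    lapE (fun y => ((‖y‖ ^ 2) ^ k)⁻¹ • y) x =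
      (2 * k * (2 * k - m) * ((‖x‖ ^ 2) ^ (k + 1))⁻¹ : ℝ) • x := by
  let e := EuclideanSpace.basisFun (Fin m) ℝ
  have he (i : Fin m) : EuclideanSpace.single i (1 : ℝ) = e i :=
    (EuclideanSpace.basisFun_apply _ _ _).symm
  have hsum : ∑ i, ⟪x, e i⟫ • e i = x := by
    simpa only [real_inner_comm] using e.sum_repr' x
  have hsq : ∑ i, ⟪x, e i⟫ ^ 2 = ‖x‖ ^ 2 := by
    simpa only [sq, real_inner_comm x, real_inner_self_eq_norm_sq] using e.sum_inner_mul_inner x x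
  simp only [lapE, he, fderiv_fderiv_inv_norm_sq_pow_smul_apply k hx, e.orthonormal.1,
    Finset.sum_add_distrib, ← Finset.sum_smul]
  simp only [mul_smul _ ⟪x, _⟫, ← Finset.smul_sum, hsum, Finset.sum_sub_distrib,
    ← Finset.mul_sum, hsq, Finset.sum_const, Finset.card_univ, Fintype.card_fin, nsmul_eq_mul,
    ← add_smul]
  have hr : ‖x‖ ^ 2 ≠ 0 := by positivity
  congr 1
  field_simp
  ring

end Laplacian

theorem stmt_10 :
    let φ : EuclideanSpace ℝ (Fin 4) → EuclideanSpace ℝ (Fin 4) :=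
      fun x => (‖x‖ ^ 2)⁻¹ • x
    (∀ x : EuclideanSpace ℝ (Fin 4), x ≠ 0 →
        lapE φ x = (-4 / ‖x‖ ^ 4) • x ∧ lapE φ x ≠ 0) ∧
    (∀ x : EuclideanSpace ℝ (Fin 4), x ≠ 0 → lapE (lapE φ) x = 0) ∧
    (∀ x : EuclideanSpace ℝ (Fin 4), x ≠ 0 →
        IsConformalMap (fderiv ℝ φ x) ∧ fderiv ℝ φ x ≠ 0) := by
  intro φ
  have hlap (x : EuclideanSpace ℝ (Fin 4)) (hx : x ≠ 0) : lapE φ x = (-4 / ‖x‖ ^ 4) • x := by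
    have hφ : φ = fun y => ((‖y‖ ^ 2) ^ 1)⁻¹ • y := by simp only [φ, pow_one]
    rw [hφ, lapE_inv_norm_sq_pow_smul 1 hx]
    congr 1
    ring
  refine ⟨fun x hx => ⟨hlap x hx, ?_⟩, fun x hx => ?_, fun x hx => ?_⟩
  · rw [hlap x hx]
    have : ‖x‖ ≠ 0 := norm_ne_zero_iff.2 hx
    exact smul_ne_zero (by positivity) hx
  · have h : lapE φ =ᶠ[𝓝 x] (-4 : ℝ) • fun y => ((‖y‖ ^ 2) ^ 2)⁻¹ • y := by
      filter_upwards [isOpen_ne.mem_nhds hx] with y hy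
      rw [hlap y hy, Pi.smul_apply, smul_smul]
      ring_nf
    rw [lapE_congr_of_eventuallyEq h, lapE_const_smul, Pi.smul_apply,
      lapE_inv_norm_sq_pow_smul 2 hx]
    norm_num
  · have h := isConformalMap_fderiv_inv_norm_sq_smul hx
    exact ⟨h, h.ne_zero⟩
end
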